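/- With f = 1/ψ' and K(x,y) = −(1/4)·[f(x+y)f'(x)f'(y) − f(x)f'(x+y)f'(y) − f(y)f'(x+y)f'(x)]/[f(x+y) − f(x) − f(y)]², one has K(x,y) → −1/2 as x, y → ∞ and K(x,y) → −1/4 as x → 0⁺, y → ∞. -/

import Mathlib

noncomputable def trigamma (x : ℝ) : ℝ := ∑' k : ℕ, 1 / (x + k) ^ 2

noncomputable def f (x : ℝ) : ℝ := 1 / trigamma x

noncomputable def K (x y : ℝ) : ℝ :=
  -(1 / 4) * (f (x + y) * deriv f x * deriv f y
      - f x * deriv f (x + y) * deriv f y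
      - f y * deriv f (x + y) * deriv f x)
    / (f (x + y) - f x - f y) ^ 2

/-!
For `q = 1, 2, 3` the sum `ζ(q + 1, x) = ∑ₖ (x + k) ^ (-(q + 1))` is squeezed between
`(1 - x⁻²)` times and `1` times the telescoping sum
`∑ₖ ((x + k - 1/2) ^ (-q) - (x + k + 1/2) ^ (-q)) / q = (x - 1/2) ^ (-q) / q`.
Since `f = 1 / ζ(2, ·)`, this gives, as `x → ∞`, `f x = x - 1/2 + o(1)`, `f' x → 1`,
`f (f' - 1) → 0` and `f f'' → 0` (the leading terms of `4 ζ(3)² - 3 ζ(4) ζ(2)` cancel).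
Near `0` the term `k = 0` dominates: `f x ~ x²` and `f' x ~ 2x`.

For `x, y → ∞` the denominator `D` of `K` tends to `1/2`, and so does the numerator once it is
written as `D f'(x) f'(y) + f(x) (f'(x) - f'(x+y)) f'(y) + f(y) (f'(y) - f'(x+y)) f'(x)`.
For `x → 0⁺`, `y → ∞` we divide the numerator by `x²` and `D` by `x`; by the mean value theorem
`(f(x+y) - f(y)) / x → 1` and `f(y) (f'(x+y) - f'(y)) / x → 0`.
-/

open Filter Set Topology

/-- The Hurwitz zeta value `ζ(p, x)`; `trigamma` is `hurwitz 2`. -/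
noncomputable def hurwitz (p : ℕ) (x : ℝ) : ℝ := ∑' k : ℕ, 1 / (x + k) ^ p

lemma hasSum_sub_succ_of_antitone {g : ℕ → ℝ} (hg : Antitone g) (hlim : Tendsto g atTop (𝓝 0)) :
    HasSum (fun k => g k - g (k + 1)) (g 0) := by
  rw [hasSum_iff_tendsto_nat_of_nonneg (fun k => sub_nonneg.2 (hg k.le_succ))]
  simp_rw [Finset.sum_range_sub']
  simpa using tendsto_const_nhds.sub hlim

/-- The lower bound fails for `q ≥ 4`, where the relative midpoint-rule error `(q+1)(q+2)/(24 a²)`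
exceeds `1 / a²`. -/
lemma inv_pow_succ_bounds {q : ℕ} (hq1 : 1 ≤ q) (hq3 : q ≤ 3) {a : ℝ} (ha : 1 / 2 < a) :
    (1 - 1 / a ^ 2) * ((1 / (a - 1 / 2) ^ q - 1 / (a + 1 / 2) ^ q) / q) ≤ 1 / a ^ (q + 1) ∧
      1 / a ^ (q + 1) ≤ (1 / (a - 1 / 2) ^ q - 1 / (a + 1 / 2) ^ q) / q := by
  have hb : 0 < a - 1 / 2 := by linarith
  have hc : 0 < a + 1 / 2 := by linarith
  have ha0 : 0 < a := by linarith
  have hm : 0 < a ^ 2 - 1 / 4 := by nlinarith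
  interval_cases q
  · have e : (1 / (a - 1 / 2) ^ 1 - 1 / (a + 1 / 2) ^ 1) / ((1 : ℕ) : ℝ)
        = 1 / (a ^ 2 - 1 / 4) := by
      rw [div_sub_div _ _ (pow_pos hb _).ne' (pow_pos hc _).ne', div_div,
        div_eq_div_iff (by positivity) (by positivity)]
      ring
    rw [e]
    constructor
    · rw [one_sub_div (by positivity), div_mul_div_comm,
        div_le_div_iff₀ (by positivity) (by positivity)]
      nlinarith
    · exact one_div_le_one_div_of_le hm (by linarith)
  · have e : (1 / (a - 1 / 2) ^ 2 - 1 / (a + 1 / 2) ^ 2) / ((2 : ℕ) : ℝ)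
        = a / (a ^ 2 - 1 / 4) ^ 2 := by
      rw [div_sub_div _ _ (pow_pos hb _).ne' (pow_pos hc _).ne', div_div,
        div_eq_div_iff (by positivity) (by positivity)]
      ring
    rw [e]
    constructor
    · rw [one_sub_div (by positivity), div_mul_div_comm,
        div_le_div_iff₀ (by positivity) (by positivity)]
      nlinarith [pow_pos ha0 3, pow_pos ha0 4, pow_pos ha0 5]
    · rw [div_le_div_iff₀ (by positivity) (by positivity)]
      nlinarith [pow_pos ha0 3, pow_pos ha0 4, pow_pos ha0 5]
  · have e : (1 / (a - 1 / 2) ^ 3 - 1 / (a + 1 / 2) ^ 3) / ((3 : ℕ) : ℝ)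
        = (a ^ 2 + 1 / 12) / (a ^ 2 - 1 / 4) ^ 3 := by
      rw [div_sub_div _ _ (pow_pos hb _).ne' (pow_pos hc _).ne', div_div,
        div_eq_div_iff (by positivity) (by positivity)]
      ring
    rw [e]
    constructor
    · rw [one_sub_div (by positivity), div_mul_div_comm,
        div_le_div_iff₀ (by positivity) (by positivity)]
      nlinarith [pow_pos ha0 3, pow_pos ha0 4, pow_pos ha0 5, pow_pos ha0 6]
    · rw [div_le_div_iff₀ (by positivity) (by positivity)]
      nlinarith [pow_pos ha0 3, pow_pos ha0 4, pow_pos ha0 5, pow_pos ha0 6]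

lemma hasSum_inv_pow_sub {q : ℕ} (hq : 1 ≤ q) {x : ℝ} (hx : 1 / 2 < x) :
    HasSum (fun k : ℕ => 1 / (x + k - 1 / 2) ^ q - 1 / (x + k + 1 / 2) ^ q)
      (1 / (x - 1 / 2) ^ q) := by
  have hpos : ∀ k : ℕ, 0 < x + k - 1 / 2 := fun k => by linarith [k.cast_nonneg (α := ℝ)]
  have hanti : Antitone fun k : ℕ => 1 / (x + k - 1 / 2) ^ q := fun i j hij =>
    one_div_le_one_div_of_le (pow_pos (hpos i) q) (by gcongr; exact (hpos i).le)
  have hlim : Tendsto (fun k : ℕ => 1 / (x + k - 1 / 2) ^ q) atTop (𝓝 0) := by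
    refine tendsto_const_nhds.div_atTop ((tendsto_pow_atTop (by omega)).comp ?_)
    exact tendsto_atTop_add_const_right _ _
      (tendsto_atTop_add_const_left _ _ tendsto_natCast_atTop_atTop)
  convert hasSum_sub_succ_of_antitone hanti hlim using 1
  · ext k; push_cast; ring_nf
  · simp

section hurwitz

variable {p : ℕ} {x : ℝ}

lemma summable_hurwitz (hx : 0 < x) (hp : 2 ≤ p) :
    Summable (fun k : ℕ => 1 / (x + k) ^ p) := by
  have h := (Real.summable_one_div_nat_add_rpow x p).2 (by exact_mod_cast hp)
  refine h.congr fun k => ?_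
  rw [abs_of_pos (by positivity), Real.rpow_natCast, add_comm]

lemma hurwitz_pos (hx : 0 < x) (hp : 2 ≤ p) : 0 < hurwitz p x :=
  (summable_hurwitz hx hp).tsum_pos (fun k => by positivity) 0 (by simpa using by positivity)

lemma hurwitz_le_hurwitz {y : ℝ} (hx : 0 < x) (hxy : x ≤ y) (hp : 2 ≤ p) :
    hurwitz p y ≤ hurwitz p x :=
  (summable_hurwitz (hx.trans_le hxy) hp).tsum_le_tsum
    (fun k => one_div_le_one_div_of_le (by positivity) (by gcongr)) (summable_hurwitz hx hp)

lemma hurwitz_eq_one_div_pow_add (hx : 0 < x) (hp : 2 ≤ p) : hurwitz p x = 1 / x ^ p + hurwitz p (x + 1) := by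
  rw [hurwitz, (summable_hurwitz hx hp).tsum_eq_zero_add, hurwitz]
  simp only [Nat.cast_zero, add_zero, Nat.cast_add, Nat.cast_one, add_assoc, add_comm (1 : ℝ)]

lemma hasDerivAt_hurwitz (hx : 0 < x) (hp : 2 ≤ p) :
    HasDerivAt (hurwitz p) (-(p : ℝ) * hurwitz (p + 1) x) x := by
  have hterm : ∀ (k : ℕ) (y : ℝ), 0 < y →
      HasDerivAt (fun z : ℝ => 1 / (z + k) ^ p) (-(p : ℝ) * (1 / (y + k) ^ (p + 1))) y := by
    intro k y hy
    have hyk : y + k ≠ 0 := by positivity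
    have h := (((hasDerivAt_id y).add_const (k : ℝ)).fun_pow p).inv (pow_ne_zero p hyk)
    simp only [id, one_div] at h ⊢
    refine h.congr_deriv ?_
    obtain ⟨q, rfl⟩ : ∃ q, p = q + 1 := ⟨p - 1, by omega⟩
    rw [Nat.add_sub_cancel]
    field_simp
    ring
  have hsum := (summable_hurwitz (half_pos hx) (by omega : 2 ≤ p + 1)).mul_left (p : ℝ)
  have := hasDerivAt_tsum_of_isPreconnected hsum isOpen_Ioi isPreconnected_Ioi
    (fun k y hy => hterm k y (lt_trans (half_pos hx) hy)) (fun k y (hy : x / 2 < y) => ?_)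
    (half_lt_self hx) (summable_hurwitz hx hp) (half_lt_self hx)
  · rwa [tsum_mul_left] at this
  · have hy0 : 0 < y := (half_pos hx).trans hy
    rw [norm_mul, norm_neg, Real.norm_natCast, Real.norm_of_nonneg (by positivity)]
    gcongr

lemma tendsto_pow_mul_hurwitz_nhdsGT_zero (hp : 2 ≤ p) :
    Tendsto (fun x => x ^ p * hurwitz p x) (𝓝[>] 0) (𝓝 1) := by
  have hcont : Tendsto (fun x => hurwitz p (x + 1)) (𝓝 0) (𝓝 (hurwitz p 1)) := by
    have := (continuous_add_const (1 : ℝ)).tendsto 0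
    rw [zero_add] at this
    exact (hasDerivAt_hurwitz one_pos hp).continuousAt.tendsto.comp this
  have h := ((continuous_pow p).tendsto 0).mul hcont
  rw [zero_pow (by omega), zero_mul] at h
  have h1 := (tendsto_const_nhds (x := (1 : ℝ))).add
    (h.mono_left (nhdsWithin_le_nhds (s := Ioi 0)))
  rw [add_zero] at h1
  refine h1.congr' ?_
  filter_upwards [self_mem_nhdsWithin] with x (hx : 0 < x)
  rw [hurwitz_eq_one_div_pow_add hx hp, mul_add, mul_one_div_cancel (pow_ne_zero p hx.ne')]

end hurwitz

lemma hurwitz_succ_bounds {q : ℕ} (hq1 : 1 ≤ q) (hq3 : q ≤ 3) {x : ℝ} (hx : 1 / 2 < x) :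
    1 - 1 / x ^ 2 ≤ q * (x - 1 / 2) ^ q * hurwitz (q + 1) x ∧
      q * (x - 1 / 2) ^ q * hurwitz (q + 1) x ≤ 1 := by
  have hS := (summable_hurwitz (by linarith) (by omega : 2 ≤ q + 1)).hasSum
  have hΔ := (hasSum_inv_pow_sub hq1 hx).div_const q
  have hxk : ∀ k : ℕ, x ≤ x + k := fun k => le_add_of_nonneg_right k.cast_nonneg
  have hterm := fun k : ℕ => inv_pow_succ_bounds hq1 hq3 (a := x + k) (hx.trans_le (hxk k))
  have hqu : 0 < q * (x - 1 / 2) ^ q := by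
    have : 0 < x - 1 / 2 := by linarith
    have : (0 : ℝ) < q := by exact_mod_cast hq1
    positivity
  have hval : 1 / (x - 1 / 2) ^ q / q = 1 / (q * (x - 1 / 2) ^ q) := by
    rw [div_div, mul_comm]
  rw [hval] at hΔ
  rw [mul_comm, ← le_div_iff₀ hqu, ← div_le_iff₀ hqu]
  constructor
  · have hle : ∀ k : ℕ, (1 - 1 / x ^ 2) * ((1 / (x + k - 1 / 2) ^ q - 1 / (x + k + 1 / 2) ^ q) / q)
        ≤ 1 / (x + k) ^ (q + 1) := fun k => by
      have hx0 : 0 < x := by linarith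
      have hD := (one_div_pos.2 (pow_pos (hx0.trans_le (hxk k)) (q + 1))).trans_le (hterm k).2
      refine le_trans (mul_le_mul_of_nonneg_right ?_ hD.le) (hterm k).1
      gcongr
      exact hxk k
    have := hasSum_le hle (hΔ.mul_left _) hS
    rwa [mul_one_div] at this
  · exact hasSum_le (fun k => (hterm k).2) hS hΔ

lemma tendsto_mul_one_sub_hurwitz {q : ℕ} (hq1 : 1 ≤ q) (hq3 : q ≤ 3) :
    Tendsto (fun x => x * (1 - q * (x - 1 / 2) ^ q * hurwitz (q + 1) x)) atTop (𝓝 0) := by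
  have hbound : ∀ᶠ x : ℝ in atTop, 1 ≤ x ∧ 1 - 1 / x ^ 2 ≤ q * (x - 1 / 2) ^ q * hurwitz (q + 1) x ∧
      q * (x - 1 / 2) ^ q * hurwitz (q + 1) x ≤ 1 := by
    filter_upwards [eventually_ge_atTop 1] with x hx
    exact ⟨hx, hurwitz_succ_bounds hq1 hq3 (by linarith)⟩
  refine tendsto_of_tendsto_of_tendsto_of_le_of_le' tendsto_const_nhds
    ((tendsto_const_nhds (x := (1 : ℝ))).div_atTop tendsto_id) ?_ ?_
  · filter_upwards [hbound] with x ⟨hx, _, h⟩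
    nlinarith
  · filter_upwards [hbound] with x ⟨hx, h, _⟩
    calc x * (1 - q * (x - 1 / 2) ^ q * hurwitz (q + 1) x) ≤ x * (1 / x ^ 2) := by
          gcongr; linarith
      _ = 1 / id x := by simp only [id]; field_simp

lemma tendsto_hurwitz_succ {q : ℕ} (hq1 : 1 ≤ q) (hq3 : q ≤ 3) :
    Tendsto (fun x => q * (x - 1 / 2) ^ q * hurwitz (q + 1) x) atTop (𝓝 1) := by
  have h := (tendsto_const_nhds (x := (1 : ℝ))).sub
    ((tendsto_mul_one_sub_hurwitz hq1 hq3).mul tendsto_inv_atTop_zero)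
  rw [zero_mul, sub_zero] at h
  refine h.congr' ?_
  filter_upwards [eventually_gt_atTop 0] with x hx
  field_simp
  ring

lemma tendsto_mul_one_sub_hurwitz_two :
    Tendsto (fun x => x * (1 - (x - 1 / 2) * hurwitz 2 x)) atTop (𝓝 0) := by
  simpa using tendsto_mul_one_sub_hurwitz (q := 1) le_rfl (by norm_num)

lemma tendsto_mul_one_sub_hurwitz_three :
    Tendsto (fun x => x * (1 - 2 * (x - 1 / 2) ^ 2 * hurwitz 3 x)) atTop (𝓝 0) := by
  simpa using tendsto_mul_one_sub_hurwitz (q := 2) (by norm_num) (by norm_num)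

lemma tendsto_hurwitz_two : Tendsto (fun x => (x - 1 / 2) * hurwitz 2 x) atTop (𝓝 1) := by
  simpa using tendsto_hurwitz_succ (q := 1) le_rfl (by norm_num)

lemma tendsto_hurwitz_three :
    Tendsto (fun x => 2 * (x - 1 / 2) ^ 2 * hurwitz 3 x) atTop (𝓝 1) := by
  simpa using tendsto_hurwitz_succ (q := 2) (by norm_num) (by norm_num)

lemma tendsto_hurwitz_four :
    Tendsto (fun x => 3 * (x - 1 / 2) ^ 3 * hurwitz 4 x) atTop (𝓝 1) := by
  simpa using tendsto_hurwitz_succ (q := 3) (by norm_num) (by norm_num)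

lemma tendsto_sub_half_div_atTop : Tendsto (fun x : ℝ => (x - 1 / 2) / x) atTop (𝓝 1) := by
  have h := (tendsto_const_nhds (x := (1 : ℝ))).sub
    ((tendsto_const_nhds (x := (1 / 2 : ℝ))).div_atTop tendsto_id)
  rw [sub_zero] at h
  refine h.congr' ?_
  filter_upwards [eventually_gt_atTop 0] with x hx
  simp only [id]
  field_simp

lemma f_eq_one_div_hurwitz (x : ℝ) : f x = 1 / hurwitz 2 x := rfl

section f

variable {x : ℝ}

lemma f_pos (hx : 0 < x) : 0 < f x := one_div_pos.2 (hurwitz_pos hx le_rfl)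

lemma monotoneOn_f : MonotoneOn f (Ioi 0) := fun _ ha _ hb hab =>
  one_div_le_one_div_of_le (hurwitz_pos hb le_rfl) (hurwitz_le_hurwitz ha hab le_rfl)

lemma hasDerivAt_f (hx : 0 < x) : HasDerivAt f (2 * hurwitz 3 x / hurwitz 2 x ^ 2) x := by
  have h := (hasDerivAt_const x (1 : ℝ)).div (hasDerivAt_hurwitz hx le_rfl)
    (hurwitz_pos hx le_rfl).ne'
  exact h.congr_deriv (by push_cast; ring)

lemma hasDerivAt_deriv_f (hx : 0 < x) :
    HasDerivAt (deriv f)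
      (2 * (4 * hurwitz 3 x ^ 2 - 3 * hurwitz 4 x * hurwitz 2 x) / hurwitz 2 x ^ 3) x := by
  have hS2 := (hurwitz_pos hx le_rfl).ne'
  have h := ((hasDerivAt_hurwitz hx (by norm_num : 2 ≤ 3)).const_mul 2).div
    ((hasDerivAt_hurwitz hx le_rfl).fun_pow 2) (pow_ne_zero 2 hS2)
  refine (h.congr_deriv ?_).congr_of_eventuallyEq ?_
  · push_cast
    field_simp
    ring
  · filter_upwards [Ioi_mem_nhds hx] with t ht using (hasDerivAt_f ht).deriv

end f

/- Writing `A = (x - 1/2) ζ(2, x)`, `B = 2 (x - 1/2)² ζ(3, x)`, `C = 3 (x - 1/2)³ ζ(4, x)`, one has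
`f x = (x - 1/2) / A`, `f' x = B / A²` and `f'' x = 2 (B² - C A) / ((x - 1/2) A³)`. -/

lemma tendsto_f_sub_atTop : Tendsto (fun x => f x - (x - 1 / 2)) atTop (𝓝 0) := by
  have h := (tendsto_sub_half_div_atTop.mul tendsto_mul_one_sub_hurwitz_two).div
    tendsto_hurwitz_two one_ne_zero
  rw [mul_zero, zero_div] at h
  refine h.congr' ?_
  filter_upwards [eventually_gt_atTop 1] with x hx
  have hS := (hurwitz_pos (by linarith : 0 < x) le_rfl).ne'
  have hu : x - 1 / 2 ≠ 0 := by linarith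
  simp only [Pi.div_apply]
  rw [f_eq_one_div_hurwitz]
  generalize x - 1 / 2 = u at hu ⊢
  field_simp

lemma tendsto_deriv_f_atTop : Tendsto (deriv f) atTop (𝓝 1) := by
  have h := tendsto_hurwitz_three.div (tendsto_hurwitz_two.pow 2) (by norm_num)
  rw [one_pow, div_one] at h
  refine h.congr' ?_
  filter_upwards [eventually_gt_atTop 1] with x hx
  have hS := (hurwitz_pos (by linarith : 0 < x) le_rfl).ne'
  have hu : x - 1 / 2 ≠ 0 := by linarith
  simp only [Pi.div_apply]
  rw [(hasDerivAt_f (by linarith)).deriv]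
  generalize x - 1 / 2 = u at hu ⊢
  field_simp

lemma tendsto_f_mul_deriv_f_sub_one_atTop :
    Tendsto (fun x => f x * (deriv f x - 1)) atTop (𝓝 0) := by
  have hA := tendsto_hurwitz_two
  have h := (tendsto_sub_half_div_atTop.mul
    ((tendsto_mul_one_sub_hurwitz_two.mul (hA.const_add 1)).sub
      tendsto_mul_one_sub_hurwitz_three)).div (hA.pow 3) (by norm_num)
  rw [zero_mul, sub_zero, mul_zero, zero_div] at h
  refine h.congr' ?_
  filter_upwards [eventually_gt_atTop 1] with x hx
  have hS := (hurwitz_pos (by linarith : 0 < x) le_rfl).ne'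
  have hu : x - 1 / 2 ≠ 0 := by linarith
  simp only [Pi.div_apply]
  rw [(hasDerivAt_f (by linarith)).deriv, f_eq_one_div_hurwitz]
  generalize x - 1 / 2 = u at hu ⊢
  field_simp
  ring

lemma tendsto_f_mul_deriv_deriv_f_atTop :
    Tendsto (fun x => f x * deriv (deriv f) x) atTop (𝓝 0) := by
  have hA := tendsto_hurwitz_two
  have h := (((tendsto_hurwitz_three.pow 2).sub (tendsto_hurwitz_four.mul hA)).const_mul 2).div
    (hA.pow 4) (by norm_num)
  norm_num at h
  refine h.congr' ?_
  filter_upwards [eventually_gt_atTop 1] with x hx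
  have hS := (hurwitz_pos (by linarith : 0 < x) le_rfl).ne'
  have hu : x - 1 / 2 ≠ 0 := by linarith
  simp only [Pi.div_apply]
  rw [(hasDerivAt_deriv_f (by linarith)).deriv, f_eq_one_div_hurwitz]
  generalize x - 1 / 2 = u at hu ⊢
  field_simp
  ring

lemma tendsto_f_div_sq_nhdsGT_zero : Tendsto (fun x => f x / x ^ 2) (𝓝[>] 0) (𝓝 1) := by
  have h := (tendsto_pow_mul_hurwitz_nhdsGT_zero le_rfl).inv₀ one_ne_zero
  rw [inv_one] at h
  refine h.congr' ?_
  filter_upwards [self_mem_nhdsWithin] with x (hx : 0 < x)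
  rw [f_eq_one_div_hurwitz, div_div, mul_comm, one_div]

lemma tendsto_deriv_f_div_nhdsGT_zero : Tendsto (fun x => deriv f x / x) (𝓝[>] 0) (𝓝 2) := by
  have h := ((tendsto_pow_mul_hurwitz_nhdsGT_zero (p := 3) (by norm_num)).const_mul 2).div
    ((tendsto_pow_mul_hurwitz_nhdsGT_zero le_rfl).pow 2) (by norm_num)
  norm_num at h
  refine h.congr' ?_
  filter_upwards [self_mem_nhdsWithin] with x (hx : 0 < x)
  have hS := (hurwitz_pos hx le_rfl).ne'
  simp only [Pi.div_apply]
  rw [(hasDerivAt_f hx).deriv]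
  field_simp

lemma tendsto_mul_slope_nhdsGT_zero_atTop {φ φ' w : ℝ → ℝ} {a : ℝ}
    (hφ : ∀ t, a < t → HasDerivAt φ (φ' t) t) (hw : MonotoneOn w (Ioi a))
    (hw0 : ∀ t, a < t → 0 ≤ w t) (h : Tendsto (fun t => w t * φ' t) atTop (𝓝 0)) :
    Tendsto (fun p : ℝ × ℝ => w p.2 * ((φ (p.1 + p.2) - φ p.2) / p.1))
      (𝓝[>] 0 ×ˢ atTop) (𝓝 0) := by
  rw [Metric.tendsto_nhds] at h ⊢
  intro ε hε
  obtain ⟨T, hT⟩ := eventually_atTop.1 (h ε hε)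
  filter_upwards [(eventually_mem_nhdsWithin (a := (0 : ℝ)) (s := Ioi 0)).prod_mk
    (eventually_ge_atTop (max T (a + 1)))]
    with ⟨x, y⟩ ⟨(hx : 0 < x), hy⟩
  have hay : a < y := by linarith [le_max_right T (a + 1)]
  obtain ⟨ξ, ⟨hyξ, -⟩, hξ⟩ := exists_hasDerivAt_eq_slope φ φ' (by linarith : y < x + y)
    (fun t ht => (hφ t (by linarith [ht.1])).continuousAt.continuousWithinAt)
    (fun t ht => hφ t (by linarith [ht.1]))
  rw [add_sub_cancel_right] at hξ
  have hwξ : 0 ≤ w y ∧ w y ≤ w ξ :=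
    ⟨hw0 y hay, hw (mem_Ioi.2 hay) (mem_Ioi.2 (by linarith)) hyξ.le⟩
  have := hT ξ (by linarith [le_max_left T (a + 1)])
  rw [Real.dist_eq, sub_zero] at this ⊢
  rw [← hξ, abs_mul, abs_of_nonneg hwξ.1]
  rw [abs_mul, abs_of_nonneg (hwξ.1.trans hwξ.2)] at this
  exact lt_of_le_of_lt (by gcongr; exact hwξ.2) this

lemma tendsto_f_mul_deriv_f_sub_deriv_f_add {α : Type*} {l : Filter α} {u v : α → ℝ}
    (hu : Tendsto u l atTop) (hv : Tendsto v l atTop) :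
    Tendsto (fun p => f (u p) * (deriv f (u p) - deriv f (u p + v p))) l (𝓝 0) := by
  have h := tendsto_f_mul_deriv_f_sub_one_atTop
  have hsum : Tendsto (fun p => f (u p) * (deriv f (u p + v p) - 1)) l (𝓝 0) := by
    refine squeeze_zero_norm' ?_ (tendsto_norm_zero.comp (h.comp (hu.atTop_add_atTop hv)))
    filter_upwards [hu.eventually_gt_atTop 0, hv.eventually_gt_atTop 0] with p hup hvp
    have hle : f (u p) ≤ f (u p + v p) :=
      monotoneOn_f hup (mem_Ioi.2 (by linarith)) (by linarith)
    simp only [Function.comp, norm_mul, Real.norm_of_nonneg (f_pos hup).le,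
      Real.norm_of_nonneg (f_pos (add_pos hup hvp)).le]
    gcongr
  have := (h.comp hu).sub hsum
  rw [sub_zero] at this
  refine this.congr fun p => ?_
  simp only [Function.comp]
  ring

noncomputable def curvatureNumerator (x y : ℝ) : ℝ :=
  f (x + y) * deriv f x * deriv f y - f x * deriv f (x + y) * deriv f y
    - f y * deriv f (x + y) * deriv f x

noncomputable def curvatureDenominator (x y : ℝ) : ℝ := f (x + y) - f x - f y

lemma K_eq (x y : ℝ) :
    K x y = -(1 / 4) * curvatureNumerator x y / curvatureDenominator x y ^ 2 := rfl

theorem tendsto_K_atTop_atTop :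
    Tendsto (fun p : ℝ × ℝ => K p.1 p.2) (atTop ×ˢ atTop) (𝓝 (-(1 / 2))) := by
  have hx : Tendsto (fun p : ℝ × ℝ => p.1) (atTop ×ˢ atTop) atTop := tendsto_fst
  have hy : Tendsto (fun p : ℝ × ℝ => p.2) (atTop ×ˢ atTop) atTop := tendsto_snd
  have hg := tendsto_f_sub_atTop
  have hD : Tendsto (fun p : ℝ × ℝ => curvatureDenominator p.1 p.2) (atTop ×ˢ atTop)
      (𝓝 (1 / 2)) := by
    have := (((hg.comp (hx.atTop_add_atTop hy)).sub (hg.comp hx)).sub (hg.comp hy)).const_add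
      (1 / 2)
    rw [sub_zero, sub_zero, add_zero] at this
    refine this.congr fun p => ?_
    simp only [Function.comp, curvatureDenominator]
    ring
  have hf'x := tendsto_deriv_f_atTop.comp hx
  have hf'y := tendsto_deriv_f_atTop.comp hy
  have hN : Tendsto (fun p : ℝ × ℝ => curvatureNumerator p.1 p.2) (atTop ×ˢ atTop)
      (𝓝 (1 / 2)) := by
    have := (((hD.mul hf'x).mul hf'y).add
      ((tendsto_f_mul_deriv_f_sub_deriv_f_add hx hy).mul hf'y)).add
      ((tendsto_f_mul_deriv_f_sub_deriv_f_add hy hx).mul hf'x)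
    norm_num at this
    refine this.congr fun p => ?_
    simp only [curvatureNumerator, curvatureDenominator, add_comm p.2 p.1]
    ring
  have := (hN.const_mul (-(1 / 4))).div (hD.pow 2) (by norm_num)
  norm_num at this
  refine this.congr fun p => ?_
  simp only [K_eq, Pi.div_apply]
  ring

theorem tendsto_K_nhdsGT_zero_atTop :
    Tendsto (fun p : ℝ × ℝ => K p.1 p.2) (𝓝[>] 0 ×ˢ atTop) (𝓝 (-(1 / 4))) := by
  have hx0 : Tendsto (fun p : ℝ × ℝ => p.1) (𝓝[>] 0 ×ˢ atTop) (𝓝[>] 0) := tendsto_fst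
  have hx := hx0.mono_right nhdsWithin_le_nhds
  have hy : Tendsto (fun p : ℝ × ℝ => p.2) (𝓝[>] 0 ×ˢ atTop) atTop := tendsto_snd
  have hpos : ∀ᶠ p : ℝ × ℝ in 𝓝[>] 0 ×ˢ atTop, 0 < p.1 := hx0.eventually self_mem_nhdsWithin
  have hf'y := tendsto_deriv_f_atTop.comp hy
  have hf'xy := tendsto_deriv_f_atTop.comp (hx.add_atTop hy)
  have hfx := tendsto_f_div_sq_nhdsGT_zero.comp hx0
  have hf'x := tendsto_deriv_f_div_nhdsGT_zero.comp hx0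
  have hW : Tendsto (fun p : ℝ × ℝ => (f (p.1 + p.2) - f p.2) / p.1) (𝓝[>] 0 ×ˢ atTop)
      (𝓝 1) := by
    have h := tendsto_mul_slope_nhdsGT_zero_atTop (φ := fun t => f t - t) (w := fun _ => 1)
      (fun t ht => (hasDerivAt_f ht).differentiableAt.hasDerivAt.sub (hasDerivAt_id t))
      monotoneOn_const (fun _ _ => zero_le_one) (by simpa using tendsto_deriv_f_atTop.sub_const 1)
    have := h.const_add 1
    rw [add_zero] at this
    refine this.congr' ?_
    filter_upwards [hpos] with p hp
    field_simp
    ring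
  have hV : Tendsto (fun p : ℝ × ℝ => f p.2 * ((deriv f (p.1 + p.2) - deriv f p.2) / p.1))
      (𝓝[>] 0 ×ˢ atTop) (𝓝 0) :=
    tendsto_mul_slope_nhdsGT_zero_atTop
      (fun t ht => (hasDerivAt_deriv_f ht).differentiableAt.hasDerivAt) monotoneOn_f
      (fun t ht => (f_pos ht).le) tendsto_f_mul_deriv_deriv_f_atTop
  have hN := (hf'x.mul ((hf'y.mul hW).sub hV)).sub ((hfx.mul hf'xy).mul hf'y)
  have hD := hW.sub (hfx.mul hx)
  have := (hN.const_mul (-(1 / 4))).div (hD.pow 2) (by norm_num)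
  norm_num at this
  refine this.congr' ?_
  filter_upwards [hpos] with p hp
  simp only [K_eq, curvatureNumerator, curvatureDenominator, Pi.div_apply]
  field_simp
  ring

theorem curvature_corner_limits :
    Filter.Tendsto (fun p : ℝ × ℝ => K p.1 p.2)
      (Filter.atTop ×ˢ Filter.atTop) (nhds (-(1 / 2))) ∧
    Filter.Tendsto (fun p : ℝ × ℝ => K p.1 p.2)
      ((nhdsWithin 0 (Set.Ioi 0)) ×ˢ Filter.atTop) (nhds (-(1 / 4))) :=
  ⟨tendsto_K_atTop_atTop, tendsto_K_nhdsGT_zero_atTop⟩
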